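/- arXiv:2201.05189 — 4 statements merged into one kernel-verified Lean document; each statement's English description precedes it below -/
import Mathlib

section
/- Let R : X → X be a linear isometry on a real Hilbert space with R^m = Id, S = R − Id, and A = (1/m) ∑_{i=1}^m R^i. If y ∈ (Fix R)^⊥ and x = (1/m) ∑_{k=0}^{m−2} (m−1−k) R^k y, then S(−x) = y. -/
open scoped InnerProductSpace


/-- For a linear isometry `R` with `R ^ m = 1` (m ≥ 2), `S = R - Id`, if
`y ∈ (Fix R)ᗮ` and `x = (1/m) ∑_{k=0}^{m-2} (m-1-k) R^k y`, then `S (-x) = y`. -/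
theorem stmt6 {X : Type*} [NormedAddCommGroup X] [InnerProductSpace ℝ X] [CompleteSpace X]
    (m : ℕ) (hm : 2 ≤ m) (R : X →L[ℝ] X) (hiso : ∀ x : X, ‖R x‖ = ‖x‖)
    (hRm : R ^ m = 1) (y : X) (hy : y ∈ (LinearMap.ker ((R - 1 : X →L[ℝ] X) : X →ₗ[ℝ] X))ᗮ) :
    (R - 1) (-((m : ℝ)⁻¹ • ∑ k ∈ Finset.range (m - 1),
        ((m - 1 - k : ℕ) : ℝ) • (R ^ k) y)) = y := by
  have hm0 : (m : ℝ) ≠ 0 := by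
    have : 0 < m := by omega
    exact_mod_cast this.ne'
  -- R as a linear isometry
  let Ri : X →ₗᵢ[ℝ] X := ⟨(R : X →ₗ[ℝ] X), hiso⟩
  have hRi : ∀ v : X, Ri v = R v := fun v => rfl
  have hpow : ∀ (k : ℕ) (v : X), (R ^ (k + 1)) v = R ((R ^ k) v) := by
    intro k v
    rw [pow_succ']
    rfl
  set P : X := ∑ j ∈ Finset.range m, (R ^ j) y with hPdef
  -- P is fixed by R
  have hRP : R P - P = 0 := by
    rw [hPdef, map_sum, ← Finset.sum_sub_distrib]
    have : ∀ j ∈ Finset.range m, R ((R ^ j) y) - (R ^ j) y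
        = (R ^ (j + 1)) y - (R ^ j) y := by
      intro j _; rw [hpow]
    rw [Finset.sum_congr rfl this, Finset.sum_range_sub (fun j => (R ^ j) y), hRm]
    simp
  have hPK : P ∈ LinearMap.ker ((R - 1 : X →L[ℝ] X) : X →ₗ[ℝ] X) := by
    have h1 : (R - 1) P = R P - P := by simp
    simp only [LinearMap.mem_ker]
    show (R - 1) P = 0
    rw [h1, hRP]
  -- inner product preserved by powers of R
  have hinner : ∀ (j : ℕ) (u v : X), ⟪(R ^ j) u, (R ^ j) v⟫_ℝ = ⟪u, v⟫_ℝ := by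
    intro j
    induction j with
    | zero => intro u v; simp
    | succ n ih =>
      intro u v
      rw [hpow, hpow, ← hRi, ← hRi, Ri.inner_map_map, ih]
  -- fixed points are fixed by powers
  have hfix : ∀ z ∈ LinearMap.ker ((R - 1 : X →L[ℝ] X) : X →ₗ[ℝ] X), ∀ j : ℕ, (R ^ j) z = z := by
    intro z hz j
    have hz' : R z = z := by
      have : (R - 1) z = 0 := hz
      have h2 : R z - z = 0 := by simpa using this
      exact sub_eq_zero.mp h2
    induction j with
    | zero => simp
    | succ n ih => rw [hpow, ih, hz']
  -- P is orthogonal to the kernel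
  have hPO : P ∈ (LinearMap.ker ((R - 1 : X →L[ℝ] X) : X →ₗ[ℝ] X))ᗮ := by
    intro z hz
    rw [hPdef, inner_sum]
    have : ∀ j ∈ Finset.range m, ⟪z, (R ^ j) y⟫_ℝ = 0 := by
      intro j _
      calc ⟪z, (R ^ j) y⟫_ℝ = ⟪(R ^ j) z, (R ^ j) y⟫_ℝ := by rw [hfix z hz j]
        _ = ⟪z, y⟫_ℝ := hinner j z y
        _ = 0 := hy z hz
    rw [Finset.sum_congr rfl this]
    simp
  have hP0 : P = 0 := by
    have := hPO P hPK
    exact inner_self_eq_zero (𝕜 := ℝ) |>.mp (by simpa using this)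
  -- key algebraic identity, by induction
  have aux : ∀ n : ℕ, (R - 1) (∑ k ∈ Finset.range n, ((n - k : ℕ) : ℝ) • (R ^ k) y)
      = (∑ k ∈ Finset.range (n + 1), (R ^ k) y) - ((n + 1 : ℕ) : ℝ) • y := by
    intro n
    induction n with
    | zero => simp
    | succ n ih =>
      have split : ∑ k ∈ Finset.range (n + 1), ((n + 1 - k : ℕ) : ℝ) • (R ^ k) y
          = (∑ k ∈ Finset.range n, ((n - k : ℕ) : ℝ) • (R ^ k) y)
            + ∑ k ∈ Finset.range (n + 1), (R ^ k) y := by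
        rw [Finset.sum_range_succ (fun k => ((n + 1 - k : ℕ) : ℝ) • (R ^ k) y)]
        rw [Finset.sum_range_succ (fun k => (R ^ k) y)]
        have : ∀ k ∈ Finset.range n, ((n + 1 - k : ℕ) : ℝ) • (R ^ k) y
            = ((n - k : ℕ) : ℝ) • (R ^ k) y + (R ^ k) y := by
          intro k hk
          rw [Finset.mem_range] at hk
          have : (n + 1 - k : ℕ) = (n - k) + 1 := by omega
          rw [this, Nat.cast_add, Nat.cast_one, add_smul, one_smul]
        rw [Finset.sum_congr rfl this, Finset.sum_add_distrib]
        have : (n + 1 - n : ℕ) = 1 := by omega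
        rw [this]
        simp
        abel
      rw [split, map_add, ih]
      have tel : (R - 1) (∑ k ∈ Finset.range (n + 1), (R ^ k) y)
          = (R ^ (n + 1)) y - y := by
        rw [map_sum]
        have : ∀ k ∈ Finset.range (n + 1), (R - 1) ((R ^ k) y)
            = (R ^ (k + 1)) y - (R ^ k) y := by
          intro k _
          rw [hpow]
          simp
        rw [Finset.sum_congr rfl this, Finset.sum_range_sub (fun k => (R ^ k) y)]
        simp
      rw [tel, Finset.sum_range_succ (fun k => (R ^ k) y) (n + 1)]
      push_cast
      module
  -- put everything together
  obtain ⟨n, rfl⟩ : ∃ n, m = n + 1 := ⟨m - 1, by omega⟩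
  have hT := aux n
  simp only [Nat.add_sub_cancel]
  rw [map_neg, map_smul, hT, ← hPdef, hP0]
  rw [zero_sub, smul_neg, neg_neg, smul_smul, inv_mul_cancel₀ hm0, one_smul]
end

section
/- Let R : X → X be a linear map with R^m = Id, A = (1/m) ∑_{i=1}^m R^i, S = R − Id, Q = (1/m) ∑_{i=1}^{m−1} i R^i, and Y = ker A. Then for every y ∈ Y, S(Qy) = y and Q(Sy) = y. -/
private lemma aux_telescope {X : Type*} [NormedAddCommGroup X] [InnerProductSpace ℝ X]
    (R : X →ₗ[ℝ] X) (n : ℕ) :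
    (R - 1) * ∑ i ∈ Finset.range n, ((i + 1 : ℕ) : ℝ) • R ^ (i + 1)
      = (n : ℝ) • R ^ (n + 1) - ∑ i ∈ Finset.range n, R ^ (i + 1) := by
  induction n with
  | zero => simp
  | succ n ih =>
    rw [Finset.sum_range_succ, mul_add, ih, Finset.sum_range_succ, mul_smul_comm, sub_mul,
      one_mul, ← pow_succ', smul_sub]
    push_cast
    rw [add_smul, one_smul, add_smul, one_smul]
    abel

/-- For a linear map `R` with `R ^ m = 1`, on `Y = ker A` the operators `S = R - Id`
and `Q = (1/m) ∑_{i=1}^{m-1} i R^i` are mutually inverse: `S(Qy) = y` and `Q(Sy) = y`. -/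
theorem stmt10 {X : Type*} [NormedAddCommGroup X] [InnerProductSpace ℝ X]
    (m : ℕ) (hm : 2 ≤ m) (R : X →ₗ[ℝ] X) (hRm : R ^ m = 1) :
    ∀ y : X, ((m : ℝ)⁻¹ • ∑ i ∈ Finset.range m, R ^ (i + 1)) y = 0 →
      (R - 1) (((m : ℝ)⁻¹ • ∑ i ∈ Finset.range (m - 1), ((i + 1 : ℕ) : ℝ) • R ^ (i + 1)) y) = y ∧
      ((m : ℝ)⁻¹ • ∑ i ∈ Finset.range (m - 1), ((i + 1 : ℕ) : ℝ) • R ^ (i + 1)) ((R - 1) y) = y := by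
  intro y hy
  have hm0 : (m : ℝ) ≠ 0 := by positivity
  set T : X →ₗ[ℝ] X := ∑ i ∈ Finset.range m, R ^ (i + 1) with hT
  set Q : X →ₗ[ℝ] X := ∑ i ∈ Finset.range (m - 1), ((i + 1 : ℕ) : ℝ) • R ^ (i + 1) with hQ
  have hTy : T y = 0 := by
    have : (m : ℝ)⁻¹ • T y = 0 := hy
    have := congrArg (fun z => (m : ℝ) • z) this
    simpa [smul_smul, hm0] using this
  have key : (R - 1) * Q = (m : ℝ) • 1 - T := by
    have h1 : m - 1 + 1 = m := Nat.succ_pred_eq_of_pos (show 0 < m by omega)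
    have := aux_telescope R (m - 1)
    rw [h1, hRm] at this
    rw [hQ, this, hT]
    have h2 : ∑ i ∈ Finset.range m, R ^ (i + 1)
        = (∑ i ∈ Finset.range (m - 1), R ^ (i + 1)) + 1 := by
      conv_lhs => rw [← h1, Finset.sum_range_succ, h1, hRm]
    rw [h2]
    have h3 : ((m : ℝ) - 1) • (1 : X →ₗ[ℝ] X) = (m : ℝ) • 1 - 1 := by
      rw [sub_smul, one_smul]
    have h4 : ((m - 1 : ℕ) : ℝ) = (m : ℝ) - 1 := by
      rw [Nat.cast_sub (by omega : 1 ≤ m)]; push_cast; ring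
    rw [h4, h3]
    abel
  have comm : Q * (R - 1) = (R - 1) * Q := by
    exact Commute.eq (Commute.sum_left _ _ _ fun i _ =>
      (((Commute.refl R).pow_left _).sub_right ((Commute.one_right _))).smul_left _)
  constructor
  · have : (R - 1) (((m : ℝ)⁻¹ • Q) y) = ((m : ℝ)⁻¹ • ((R - 1) * Q)) y := by
      simp [Module.End.mul_apply]
    rw [this, key]
    simp [LinearMap.smul_apply, LinearMap.sub_apply, hTy, smul_smul, hm0]
  · have : ((m : ℝ)⁻¹ • Q) ((R - 1) y) = ((m : ℝ)⁻¹ • (Q * (R - 1))) y := by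
      simp [Module.End.mul_apply]
    rw [this, comm, key]
    simp [LinearMap.smul_apply, LinearMap.sub_apply, hTy, smul_smul, hm0]
end

section
/- Let X be a real Hilbert space, f ∈ Γ₀(X), R : X → X a nonexpansive linear operator, and S = R − Id. Suppose R is an isometry. Then z = Prox_f(Rz) if and only if f*(Sz) + f(z) + (1/2)‖Sz‖² = 0. -/
/-!
`z = Prox_f (R z)` says that `z` minimizes `y ↦ f y + ½‖y - R z‖²`; by convexity this is the
first-order condition `S z ∈ ∂f(z)`, which is the equality case `f*(S z) + f z = ⟪z, S z⟫` of the
Fenchel–Young inequality. Since `‖z + S z‖ = ‖R z‖ = ‖z‖`, expanding the square gives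
`⟪z, S z⟫ = -½‖S z‖²`.
-/

open RealInnerProductSpace Set Filter Topology

theorem EReal.add_coe_le_iff_coe_sub_le {a b : EReal} (hb : b ≠ ⊥) (c d : ℝ) :
    a + (c : EReal) ≤ b ↔ ((d + c : ℝ) : EReal) - b ≤ (d : EReal) - a := by
  induction a using EReal.rec <;> induction b using EReal.rec <;> simp_all
  all_goals norm_cast
  all_goals first | exact EReal.coe_ne_bot _ | constructor <;> intro <;> linarith

theorem EReal.le_coe_sub_iff_add_eq {u a : EReal} {d : ℝ} (hu : u ≠ ⊥) (ha : a ≠ ⊥)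
    (h : (d : EReal) - a ≤ u) : u ≤ (d : EReal) - a ↔ u + a = d := by
  induction u using EReal.rec <;> induction a using EReal.rec <;> simp_all
  all_goals norm_cast at *
  all_goals first | exact EReal.coe_ne_top _ | constructor <;> intro <;> linarith

theorem EReal.add_coe_eq_zero_iff {u : EReal} {c : ℝ} : u + c = 0 ↔ u = ((-c : ℝ) : EReal) := by
  induction u using EReal.rec <;> simp
  all_goals norm_cast
  all_goals first
    | exact (EReal.coe_ne_bot _).symm
    | exact (EReal.coe_ne_top _).symm
    | constructor <;> intro <;> linarith

theorem le_of_forall_mem_Ioc_le_add_mul {a b c : ℝ} (h : ∀ t ∈ Ioc (0 : ℝ) 1, a ≤ b + t * c) :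
    a ≤ b := by
  have hlim : Tendsto (fun t : ℝ => b + t * c) (𝓝[>] 0) (𝓝 b) :=
    tendsto_nhdsWithin_of_tendsto_nhds
      ((by fun_prop : Continuous fun t : ℝ => b + t * c).tendsto' 0 b (by simp))
  exact ge_of_tendsto hlim (eventually_of_mem (Ioc_mem_nhdsGT zero_lt_one) h)

section

variable {X : Type*} [NormedAddCommGroup X] [InnerProductSpace ℝ X]

theorem inner_sub_self_eq_neg_half_norm_sq {u v : X} (h : ‖v‖ = ‖u‖) :
    ⟪u, v - u⟫ = -(1 / 2 * ‖v - u‖ ^ 2) := by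
  have hexp := norm_add_sq_real u (v - u)
  rw [add_sub_cancel, h] at hexp
  linarith

theorem half_norm_sub_sq_eq (y z w : X) :
    1 / 2 * ‖y - w‖ ^ 2 = 1 / 2 * ‖z - w‖ ^ 2 - ⟪y - z, w - z⟫ + 1 / 2 * ‖y - z‖ ^ 2 := by
  have hexp := norm_sub_sq_real (y - z) (w - z)
  rw [sub_sub_sub_cancel_right, ← norm_neg (w - z), neg_sub] at hexp
  linarith

noncomputable def fenchelConj (f : X → EReal) (s : X) : EReal :=
  ⨆ x, ((⟪x, s⟫ : ℝ) : EReal) - f x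

theorem coe_inner_sub_le_fenchelConj (f : X → EReal) (s x : X) :
    ((⟪x, s⟫ : ℝ) : EReal) - f x ≤ fenchelConj f s :=
  le_iSup (fun x => ((⟪x, s⟫ : ℝ) : EReal) - f x) x

/-- `z = Prox_f w`. -/
def IsProxPoint (f : X → EReal) (w z : X) : Prop :=
  ∀ y, f z + ((1 / 2 * ‖z - w‖ ^ 2 : ℝ) : EReal) ≤ f y + ((1 / 2 * ‖y - w‖ ^ 2 : ℝ) : EReal)

/-- `s ∈ ∂f(z)`. -/
def HasSubgradientAt (f : X → EReal) (s z : X) : Prop :=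
  ∀ x, f z + ((⟪x - z, s⟫ : ℝ) : EReal) ≤ f x

variable {f : X → EReal}

theorem hasSubgradientAt_iff_fenchelConj_le (hbot : ∀ x, f x ≠ ⊥) {s z : X} :
    HasSubgradientAt f s z ↔ fenchelConj f s ≤ ((⟪z, s⟫ : ℝ) : EReal) - f z := by
  refine (forall_congr' fun x => ?_).trans iSup_le_iff.symm
  rw [EReal.add_coe_le_iff_coe_sub_le (hbot x) _ ⟪z, s⟫, inner_sub_left, add_sub_cancel]

theorem hasSubgradientAt_iff_fenchelConj_add_eq (hbot : ∀ x, f x ≠ ⊥) (hdom : ∃ x, f x ≠ ⊤)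
    {s z : X} : HasSubgradientAt f s z ↔ fenchelConj f s + f z = ⟪z, s⟫ := by
  obtain ⟨x₀, hx₀⟩ := hdom
  have hconj : fenchelConj f s ≠ ⊥ := by
    refine ne_bot_of_le_ne_bot ?_ (coe_inner_sub_le_fenchelConj f s x₀)
    rw [← EReal.coe_toReal hx₀ (hbot x₀), ← EReal.coe_sub]
    exact EReal.coe_ne_bot _
  rw [hasSubgradientAt_iff_fenchelConj_le hbot,
    EReal.le_coe_sub_iff_add_eq hconj (hbot z) (coe_inner_sub_le_fenchelConj f s z)]

theorem isProxPoint_of_hasSubgradientAt {z w : X} (h : HasSubgradientAt f (w - z) z) :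
    IsProxPoint f w z := fun y =>
  calc f z + ((1 / 2 * ‖z - w‖ ^ 2 : ℝ) : EReal)
      ≤ f z + ((⟪y - z, w - z⟫ + 1 / 2 * ‖y - w‖ ^ 2 : ℝ) : EReal) := by
        gcongr
        rw [half_norm_sub_sq_eq y z w]
        nlinarith [sq_nonneg ‖y - z‖]
    _ = f z + ((⟪y - z, w - z⟫ : ℝ) : EReal) + ((1 / 2 * ‖y - w‖ ^ 2 : ℝ) : EReal) := by
        rw [EReal.coe_add, add_assoc]
    _ ≤ f y + ((1 / 2 * ‖y - w‖ ^ 2 : ℝ) : EReal) := by gcongr; exact h y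

theorem hasSubgradientAt_of_isProxPoint (hbot : ∀ x, f x ≠ ⊥)
    (hconv : ∀ x y : X, ∀ a b : ℝ, 0 ≤ a → 0 ≤ b → a + b = 1 →
      f (a • x + b • y) ≤ (a : EReal) * f x + (b : EReal) * f y)
    {z w : X} (hmin : IsProxPoint f w z) : HasSubgradientAt f (w - z) z := by
  intro x
  by_cases hx : f x = ⊤
  · rw [hx]
    exact le_top
  obtain ⟨b, hb⟩ : ∃ b : ℝ, f x = b := ⟨_, (EReal.coe_toReal hx (hbot x)).symm⟩
  have hz : f z ≠ ⊤ := by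
    intro hz
    have hmin_x := hmin x
    rw [hz, hb, EReal.top_add_coe, ← EReal.coe_add, top_le_iff] at hmin_x
    exact EReal.coe_ne_top _ hmin_x
  obtain ⟨a, ha⟩ : ∃ a : ℝ, f z = a := ⟨_, (EReal.coe_toReal hz (hbot z)).symm⟩
  rw [ha, hb, ← EReal.coe_add, EReal.coe_le_coe_iff]
  -- compare `z` with `z + t • (x - z)`, bound `f` there by convexity, and let `t → 0`
  refine le_of_forall_mem_Ioc_le_add_mul (c := 1 / 2 * ‖x - z‖ ^ 2) fun t ⟨ht0, ht1⟩ => ?_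
  have hcv : f (z + t • (x - z)) ≤ (((1 - t) * a + t * b : ℝ) : EReal) := by
    have hseg : z + t • (x - z) = (1 - t) • z + t • x := by
      rw [smul_sub, sub_smul, one_smul]
      abel
    rw [hseg, EReal.coe_add, EReal.coe_mul, EReal.coe_mul, ← ha, ← hb]
    exact hconv z x (1 - t) t (by linarith) ht0.le (by ring)
  have hmin_t := (hmin (z + t • (x - z))).trans (add_le_add_left hcv _)
  rw [ha, ← EReal.coe_add, ← EReal.coe_add, EReal.coe_le_coe_iff,
    half_norm_sub_sq_eq (z + t • (x - z)) z w, add_sub_cancel_left, real_inner_smul_left,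
    norm_smul, Real.norm_of_nonneg ht0.le] at hmin_t
  have hscaled : t * (a + ⟪x - z, w - z⟫) ≤ t * (b + t * (1 / 2 * ‖x - z‖ ^ 2)) := by
    nlinarith
  exact le_of_mul_le_mul_left hscaled ht0

theorem isProxPoint_iff_hasSubgradientAt (hbot : ∀ x, f x ≠ ⊥)
    (hconv : ∀ x y : X, ∀ a b : ℝ, 0 ≤ a → 0 ≤ b → a + b = 1 →
      f (a • x + b • y) ≤ (a : EReal) * f x + (b : EReal) * f y) (z w : X) :
    IsProxPoint f w z ↔ HasSubgradientAt f (w - z) z :=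
  ⟨hasSubgradientAt_of_isProxPoint hbot hconv, isProxPoint_of_hasSubgradientAt⟩

end

theorem stmt17_general {X : Type*} [NormedAddCommGroup X] [InnerProductSpace ℝ X]
    (f : X → EReal) (hbot : ∀ x, f x ≠ ⊥) (hdom : ∃ x, f x ≠ ⊤)
    (hconv : ∀ x y : X, ∀ a b : ℝ, 0 ≤ a → 0 ≤ b → a + b = 1 →
      f (a • x + b • y) ≤ (a : EReal) * f x + (b : EReal) * f y)
    (R : X →L[ℝ] X) (hiso : ∀ x : X, ‖R x‖ = ‖x‖) (z : X) :
    (∀ y : X, f z + ((1 / 2 * ‖z - R z‖ ^ 2 : ℝ) : EReal) ≤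
        f y + ((1 / 2 * ‖y - R z‖ ^ 2 : ℝ) : EReal)) ↔
    (⨆ x : X, ((⟪x, R z - z⟫ : ℝ) : EReal) - f x) + f z +
        ((1 / 2 * ‖R z - z‖ ^ 2 : ℝ) : EReal) = 0 := by
  change IsProxPoint f (R z) z ↔ fenchelConj f (R z - z) + f z + _ = 0
  rw [isProxPoint_iff_hasSubgradientAt hbot hconv, hasSubgradientAt_iff_fenchelConj_add_eq hbot hdom,
    inner_sub_self_eq_neg_half_norm_sq (hiso z), EReal.add_coe_eq_zero_iff]

/-- Let `f ∈ Γ₀(X)`, `R` a linear isometry (hence nonexpansive), `S = R - Id`.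
Then `z = Prox_f (Rz)` (i.e. `z` minimizes `y ↦ f y + ½‖y - Rz‖²`) if and only if
`f*(Sz) + f(z) + ½‖Sz‖² = 0`. -/
theorem stmt17 {X : Type*} [NormedAddCommGroup X] [InnerProductSpace ℝ X] [CompleteSpace X]
    (f : X → EReal) (hbot : ∀ x, f x ≠ ⊥) (hdom : ∃ x, f x ≠ ⊤)
    (hlsc : LowerSemicontinuous f)
    (hconv : ∀ x y : X, ∀ a b : ℝ, 0 ≤ a → 0 ≤ b → a + b = 1 →
      f (a • x + b • y) ≤ (a : EReal) * f x + (b : EReal) * f y)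
    (R : X →L[ℝ] X) (hiso : ∀ x : X, ‖R x‖ = ‖x‖) (z : X) :
    (∀ y : X, f z + ((1 / 2 * ‖z - R z‖ ^ 2 : ℝ) : EReal) ≤
        f y + ((1 / 2 * ‖y - R z‖ ^ 2 : ℝ) : EReal)) ↔
    (⨆ x : X, ((⟪x, R z - z⟫ : ℝ) : EReal) - f x) + f z +
        ((1 / 2 * ‖R z - z‖ ^ 2 : ℝ) : EReal) = 0 :=
  stmt17_general f hbot hdom hconv R hiso z
end

section
/- Let R : X → X be a linear isometry on a real Hilbert space with R^m = Id, Y = (Fix R)^⊥, Q = (1/m) ∑_{i=1}^{m−1} i R^i, and Q₀ = Q|_Y. Then the operator −Q₀ − (1/2)Id on Y is skew, i.e., ⟨y, (−Q₀ − (1/2)Id)y⟩ = 0 for all y ∈ Y; in particular −Q₀ is monotone with ⟨y, −Q₀y⟩ = (1/2)‖y‖² for all y ∈ Y. -/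
open RealInnerProductSpace

/-- For a linear isometry `R` with `R ^ m = 1` (m ≥ 2), `Y = (Fix R)ᗮ`, and
`Q = (1/m) ∑_{i=1}^{m-1} i R^i`, the operator `-Q₀ - (1/2) Id` on `Y` is skew;
in particular `⟨y, -Q y⟩ = ½‖y‖²` for all `y ∈ Y`. -/
theorem stmt19 {X : Type*} [NormedAddCommGroup X] [InnerProductSpace ℝ X] [CompleteSpace X]
    (m : ℕ) (hm : 2 ≤ m) (R : X →L[ℝ] X) (hiso : ∀ x : X, ‖R x‖ = ‖x‖)
    (hRm : R ^ m = 1) :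
    ∀ y ∈ (LinearMap.ker ((R - 1 : X →L[ℝ] X) : X →ₗ[ℝ] X))ᗮ,
      ⟪y, -(((m : ℝ)⁻¹ • ∑ i ∈ Finset.range (m - 1), ((i + 1 : ℕ) : ℝ) • R ^ (i + 1)) y)
          - (1 / 2 : ℝ) • y⟫ = 0 ∧
      ⟪y, -(((m : ℝ)⁻¹ • ∑ i ∈ Finset.range (m - 1), ((i + 1 : ℕ) : ℝ) • R ^ (i + 1)) y)⟫
        = 1 / 2 * ‖y‖ ^ 2 := by
  intro y hy
  have hip : ∀ x z : X, ⟪R x, R z⟫ = ⟪x, z⟫ := by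
    intro x z
    rw [real_inner_eq_norm_add_mul_self_sub_norm_mul_self_sub_norm_mul_self_div_two,
        real_inner_eq_norm_add_mul_self_sub_norm_mul_self_sub_norm_mul_self_div_two x z,
        ← map_add, hiso, hiso, hiso]
  have hipk : ∀ (k : ℕ) (x z : X), ⟪(R ^ k) x, (R ^ k) z⟫ = ⟪x, z⟫ := by
    intro k
    induction k with
    | zero => intro x z; simp
    | succ n ih =>
      intro x z
      rw [pow_succ, ContinuousLinearMap.mul_apply, ContinuousLinearMap.mul_apply,
        ih, hip]
  set c : ℕ → ℝ := fun j => ⟪y, (R ^ j) y⟫ with hc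
  have hsym : ∀ j ≤ m, c j = c (m - j) := by
    intro j hj
    have h1 : (R ^ (m - j)) ((R ^ j) y) = y := by
      rw [← ContinuousLinearMap.mul_apply, ← pow_add, Nat.sub_add_cancel hj, hRm]
      rfl
    calc c j = ⟪(R ^ (m - j)) y, (R ^ (m - j)) ((R ^ j) y)⟫ := (hipk _ _ _).symm
    _ = ⟪y, (R ^ (m - j)) y⟫ := by rw [h1, real_inner_comm]
  -- sum of c over range m is 0
  set S : X := ∑ j ∈ Finset.range m, (R ^ j) y with hSdef
  have hRS : R S = S := by
    have h1 : R S = ∑ j ∈ Finset.range m, (R ^ (j + 1)) y := by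
      rw [hSdef, map_sum]
      refine Finset.sum_congr rfl fun j _ => ?_
      rw [pow_succ', ContinuousLinearMap.mul_apply]
    have h2 : ∑ j ∈ Finset.range (m + 1), (R ^ j) y
        = ∑ j ∈ Finset.range m, (R ^ (j + 1)) y + (R ^ 0) y :=
      Finset.sum_range_succ' _ m
    have h3 : ∑ j ∈ Finset.range (m + 1), (R ^ j) y = S + (R ^ m) y :=
      Finset.sum_range_succ _ m
    have h4 : (R ^ m) y = y := by rw [hRm]; rfl
    have h5 : (R ^ 0 : X →L[ℝ] X) y = y := rfl
    rw [h1]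
    have := h2.symm.trans h3
    rw [h4, h5] at this
    exact add_right_cancel this
  have hSker : S ∈ LinearMap.ker ((R - 1 : X →L[ℝ] X) : X →ₗ[ℝ] X) := by
    simp only [LinearMap.mem_ker, ContinuousLinearMap.coe_coe]
    have : (R - 1) S = R S - S := by
      simp [ContinuousLinearMap.sub_apply]
    rw [this, hRS, sub_self]
  have hyS : ⟪y, S⟫ = 0 := by
    rw [real_inner_comm]
    exact hy S hSker
  have hsum0 : ∑ j ∈ Finset.range m, c j = 0 := by
    rw [← hyS, hSdef, inner_sum]
  have hc0 : c 0 = ‖y‖ ^ 2 := by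
    simp only [hc, pow_zero]
    rw [show ((1 : X →L[ℝ] X)) y = y from rfl]
    exact real_inner_self_eq_norm_sq y
  have hrest : ∑ i ∈ Finset.range (m - 1), c (i + 1) = -‖y‖ ^ 2 := by
    have h := Finset.sum_range_succ' c (m - 1)
    rw [Nat.sub_add_cancel (by omega : 1 ≤ m)] at h
    rw [hsum0, hc0] at h
    linarith [h]
  -- reflection
  set T : ℝ := ∑ i ∈ Finset.range (m - 1), ((i + 1 : ℕ) : ℝ) * c (i + 1) with hT
  have hrefl : T = ∑ i ∈ Finset.range (m - 1), ((m : ℝ) - ((i + 1 : ℕ) : ℝ)) * c (i + 1) := by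
    rw [hT, ← Finset.sum_range_reflect (fun i => ((i + 1 : ℕ) : ℝ) * c (i + 1)) (m - 1)]
    refine Finset.sum_congr rfl fun j hj => ?_
    rw [Finset.mem_range] at hj
    have h1 : m - 1 - 1 - j + 1 = m - 1 - j := by omega
    have h2 : m - (m - 1 - j) = j + 1 := by omega
    have h3 : c (m - 1 - j) = c (j + 1) := by
      rw [hsym (m - 1 - j) (by omega), h2]
    rw [h1, h3]
    congr 1
    have h4 : m - 1 - j = m - (j + 1) := by omega
    rw [h4, Nat.cast_sub (by omega : j + 1 ≤ m)]
  have h2T : 2 * T = (m : ℝ) * (-‖y‖ ^ 2) := by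
    have : T + T = ∑ i ∈ Finset.range (m - 1), (m : ℝ) * c (i + 1) := by
      nth_rewrite 2 [hrefl]
      rw [hT, ← Finset.sum_add_distrib]
      refine Finset.sum_congr rfl fun j _ => ?_
      ring
    rw [two_mul, this, ← Finset.mul_sum, hrest]
  have hm0 : (m : ℝ) ≠ 0 := by positivity
  -- compute inner with Q y
  have hQy : ⟪y, (((m : ℝ)⁻¹ • ∑ i ∈ Finset.range (m - 1),
      ((i + 1 : ℕ) : ℝ) • R ^ (i + 1)) y)⟫ = -(1 / 2) * ‖y‖ ^ 2 := by
    rw [ContinuousLinearMap.smul_apply, ContinuousLinearMap.sum_apply,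
      real_inner_smul_right, inner_sum]
    have : ∑ i ∈ Finset.range (m - 1),
        ⟪y, (((i + 1 : ℕ) : ℝ) • R ^ (i + 1)) y⟫ = T := by
      rw [hT]
      refine Finset.sum_congr rfl fun j _ => ?_
      rw [ContinuousLinearMap.smul_apply, real_inner_smul_right]
    rw [this]
    field_simp
    linarith [h2T]
  constructor
  · rw [inner_sub_right, inner_neg_right, hQy, real_inner_smul_right,
      real_inner_self_eq_norm_sq]
    ring
  · rw [inner_neg_right, hQy]
    ring
end
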